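/- Joins below meets: let B be a commutative bimonoid, let (aᵢ, bᵢ) for i ∈ I and (cⱼ, dⱼ) for j ∈ J be families in B such that each bᵢ has complement b̄ᵢ and each cⱼ has complement c̄ⱼ. If the join s = ⋁_{i∈I} (aᵢ·b̄ᵢ) and the meet t = ⋀_{j∈J} (c̄ⱼ + dⱼ) exist in B, then s ≤ t if and only if cⱼ·aᵢ ≤ dⱼ + bᵢ for all i ∈ I and j ∈ J. -/

import Mathlib

/-- A commutative bimonoid: a partially ordered set with two commutative
monoid operations, a multiplication `mul` with unit `one` and an addition
`add` with unit `zero`, both monotone in each argument, satisfying the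
hemidistributive law `x·(y+z) ≤ (x·y)+z`. -/
structure CommBimonoidOn (A : Type*) [PartialOrder A] where
  mul : A → A → A
  add : A → A → A
  one : A
  zero : A
  mul_assoc : ∀ x y z, mul (mul x y) z = mul x (mul y z)
  mul_comm : ∀ x y, mul x y = mul y x
  mul_one : ∀ x, mul x one = x
  add_assoc : ∀ x y z, add (add x y) z = add x (add y z)
  add_comm : ∀ x y, add x y = add y x
  add_zero : ∀ x, add x zero = x
  mul_mono : ∀ {x y : A} (z), x ≤ y → mul x z ≤ mul y z
  add_mono : ∀ {x y : A} (z), x ≤ y → add x z ≤ add y z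
  hemi : ∀ x y z, mul x (add y z) ≤ add (mul x y) z

/-- `c` is a complement of `a` in the commutative bimonoid `S`. -/
def CommBimonoidOn.IsCompl {A : Type*} [PartialOrder A]
    (S : CommBimonoidOn A) (a c : A) : Prop :=
  S.mul a c ≤ S.zero ∧ S.one ≤ S.add a c

/-!
Multiplication by a complement `b̄` of `b` is residuated: `x·b̄ ≤ y ↔ x ≤ y + b`, one direction
by `x = x·1 ≤ x·(b̄ + b) ≤ x·b̄ + b`, the other by `(y + b)·b̄ ≤ b̄·b + y ≤ y`, both through
hemidistributivity. Applying this once for `b̄ᵢ` and once for `cⱼ` (a complement of `c̄ⱼ`) turns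
`aᵢ·b̄ᵢ ≤ c̄ⱼ + dⱼ` into `cⱼ·aᵢ ≤ dⱼ + bᵢ`, and `s ≤ t` says exactly that every `aᵢ·b̄ᵢ` lies below
every `c̄ⱼ + dⱼ`.
-/

namespace CommBimonoidOn

variable {A : Type*} [PartialOrder A] (S : CommBimonoidOn A)

theorem mul_mono_right {x y : A} (z : A) (h : x ≤ y) : S.mul z x ≤ S.mul z y := by
  rw [S.mul_comm z, S.mul_comm z]
  exact S.mul_mono z h

theorem zero_add (x : A) : S.add S.zero x = x := by
  rw [S.add_comm, S.add_zero]

variable {S}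

theorem IsCompl.symm {a c : A} (h : S.IsCompl a c) : S.IsCompl c a := by
  obtain ⟨hmul, hadd⟩ := h
  exact ⟨S.mul_comm c a ▸ hmul, S.add_comm c a ▸ hadd⟩

theorem IsCompl.mul_le_iff_le_add {b bb : A} (h : S.IsCompl b bb) {x y : A} :
    S.mul x bb ≤ y ↔ x ≤ S.add y b := by
  constructor
  · intro hxy
    calc x = S.mul x S.one := (S.mul_one x).symm
      _ ≤ S.mul x (S.add bb b) := S.mul_mono_right x (S.add_comm b bb ▸ h.2)
      _ ≤ S.add (S.mul x bb) b := S.hemi x bb b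
      _ ≤ S.add y b := S.add_mono b hxy
  · intro hxy
    calc S.mul x bb ≤ S.mul (S.add y b) bb := S.mul_mono bb hxy
      _ = S.mul bb (S.add b y) := by rw [S.mul_comm, S.add_comm y b]
      _ ≤ S.add (S.mul bb b) y := S.hemi bb b y
      _ ≤ S.add S.zero y := S.add_mono y (S.mul_comm b bb ▸ h.1)
      _ = y := S.zero_add y

theorem mul_compl_le_compl_add_iff {a b c d bb cc : A} (hb : S.IsCompl b bb)
    (hc : S.IsCompl c cc) : S.mul a bb ≤ S.add cc d ↔ S.mul c a ≤ S.add d b :=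
  calc S.mul a bb ≤ S.add cc d ↔ S.mul a bb ≤ S.add d cc := by rw [S.add_comm cc d]
    _ ↔ S.mul (S.mul a bb) c ≤ d := hc.symm.mul_le_iff_le_add.symm
    _ ↔ S.mul (S.mul c a) bb ≤ d := by
      rw [S.mul_comm c a, S.mul_assoc, S.mul_assoc, S.mul_comm bb c]
    _ ↔ S.mul c a ≤ S.add d b := hb.mul_le_iff_le_add

end CommBimonoidOn

/-- Joins below meets: if `s = ⋁ᵢ aᵢ·b̄ᵢ` and `t = ⋀ⱼ c̄ⱼ + dⱼ` exist in a
commutative bimonoid (where `b̄ᵢ`, `c̄ⱼ` are complements of `bᵢ`, `cⱼ`), then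
`s ≤ t` iff `cⱼ·aᵢ ≤ dⱼ + bᵢ` for all `i`, `j`. -/
theorem joins_below_meets {B : Type*} [PartialOrder B] (S : CommBimonoidOn B)
    {I J : Type*} (a b : I → B) (c d : J → B) (bc : I → B) (cc : J → B)
    (hbc : ∀ i, S.IsCompl (b i) (bc i))
    (hcc : ∀ j, S.IsCompl (c j) (cc j))
    (s t : B)
    (hs : IsLUB (Set.range fun i => S.mul (a i) (bc i)) s)
    (ht : IsGLB (Set.range fun j => S.add (cc j) (d j)) t) :
    s ≤ t ↔ ∀ i j, S.mul (c j) (a i) ≤ S.add (d j) (b i) := by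
  simp only [isLUB_le_iff hs, mem_upperBounds, Set.forall_mem_range, le_isGLB_iff ht,
    mem_lowerBounds]
  exact forall_congr' fun i => forall_congr' fun j =>
    CommBimonoidOn.mul_compl_le_compl_add_iff (hbc i) (hcc j)
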